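/- Let $\sigma_t = \sigma_{\min}^t$ with $\sigma_{\min} \in (0,1)$. Then for all $t \in (0,1)$, $\frac{t}{t^2 + \sigma_t^2} \leq \max(\log(\sigma_{\min}^{-1}), e^2)$. -/

import Mathlib

/-! With `L = log σ_min⁻¹` we have `σ_t = exp (-t L)`. If `t L ≥ 1` the quotient is at most
`t / t² = t⁻¹ ≤ L`; otherwise `σ_t² ≥ e⁻²`, so the quotient is at most `1 / σ_t² ≤ e²`. -/

open Real

lemma div_sq_add_sq_le_inv {t : ℝ} (ht : 0 < t) (s : ℝ) : t / (t ^ 2 + s ^ 2) ≤ t⁻¹ :=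
  calc t / (t ^ 2 + s ^ 2) ≤ t / t ^ 2 :=
        div_le_div_of_nonneg_left ht.le (by positivity) (le_add_of_nonneg_right (sq_nonneg s))
    _ = t⁻¹ := by field_simp

lemma div_sq_add_sq_le_inv_of_le_sq {t s c : ℝ} (ht : t ≤ 1) (hc : 0 < c)
    (hs : c ≤ s ^ 2) : t / (t ^ 2 + s ^ 2) ≤ c⁻¹ :=
  calc t / (t ^ 2 + s ^ 2) ≤ 1 / (t ^ 2 + s ^ 2) := by gcongr
    _ ≤ 1 / c := by gcongr; exact le_add_of_nonneg_of_le (sq_nonneg t) hs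
    _ = c⁻¹ := one_div c

lemma exp_neg_two_le_rpow_sq {a t : ℝ} (ha : 0 < a) (h : t * log a⁻¹ ≤ 1) :
    exp (-2) ≤ (a ^ t) ^ 2 := by
  rw [rpow_def_of_pos ha, ← exp_nat_mul, exp_le_exp]
  rw [log_inv] at h
  push_cast
  linarith

/-- For `σ_t = σ_min ^ t` with `σ_min ∈ (0,1)` and `t ∈ (0,1)`,
`t / (t² + σ_t²) ≤ max (log σ_min⁻¹) e²`. -/
theorem quotient_le_max_log_exp
    (smin : ℝ) (hsmin : smin ∈ Set.Ioo (0:ℝ) 1)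
    (t : ℝ) (ht : t ∈ Set.Ioo (0:ℝ) 1) :
    t / (t ^ 2 + (smin ^ t) ^ 2) ≤ max (Real.log smin⁻¹) (Real.exp 2) := by
  rcases le_or_gt 1 (t * log smin⁻¹) with hlarge | hsmall
  · calc t / (t ^ 2 + (smin ^ t) ^ 2) ≤ t⁻¹ := div_sq_add_sq_le_inv ht.1 _
      _ ≤ log smin⁻¹ := (inv_le_iff_one_le_mul₀' ht.1).2 hlarge
      _ ≤ _ := le_max_left _ _
  · calc t / (t ^ 2 + (smin ^ t) ^ 2) ≤ (exp (-2))⁻¹ :=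
          div_sq_add_sq_le_inv_of_le_sq ht.2.le (exp_pos _)
            (exp_neg_two_le_rpow_sq hsmin.1 hsmall.le)
      _ = exp 2 := by rw [← exp_neg, neg_neg]
      _ ≤ _ := le_max_right _ _
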